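/- arXiv:2104.06234 — 7 statements merged into one kernel-verified Lean document; each statement's English description precedes it below -/
import Mathlib

section
/- Let K be a nonempty proper subset of Fin n with n ≥ 2, and define γ and ω^n as above. Define E^K as the set of assignments x_K : K → ZMod 2 such that for all k, ℓ ∈ K there exists a constant c ∈ ZMod 2 with ω^n_k(x) + ω^n_ℓ(x) = c for every extension x of x_K to Fin n (i.e., independent of the values outside K). Then the cardinality of E^K is at most 2. -/
def gam (n : ℕ) (k i : Fin n) : ZMod 2 :=
  if (i < k ∧ ¬ (i.val % 2 = k.val % 2)) ∨ (k < i ∧ i.val % 2 = k.val % 2) then 1 else 0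

def omega (n : ℕ) (k : Fin n) (x : Fin n → ZMod 2) : ZMod 2 :=
  (∑ i : Fin n, ∑ j : Fin n, if i < j ∧ i ≠ k ∧ j ≠ k then x i * x j else 0)
    + ∑ i : Fin n, gam n k i * x i

lemma ztw (a b c d : ZMod 2) : ((a + b) + (c + d)) + (a + c) = b + d := by
  linear_combination (CharTwo.add_self_eq_zero a) + (CharTwo.add_self_eq_zero c)

lemma omega_update (n : ℕ) (k m : Fin n) (hmk : m ≠ k) (x : Fin n → ZMod 2) :
    omega n k (Function.update x m (x m + 1)) + omega n k x
      = (∑ j : Fin n, if j ≠ k ∧ j ≠ m then x j else 0) + gam n k m := by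
  set x' := Function.update x m (x m + 1) with hx'
  have hx'm : x' m = x m + 1 := Function.update_self _ _ _
  have hx'ne : ∀ i : Fin n, i ≠ m → x' i = x i := fun i hi => Function.update_of_ne hi _ _
  unfold omega
  have hL : (∑ i : Fin n, gam n k i * x' i)
      = (∑ i : Fin n, gam n k i * x i) + gam n k m := by
    have h1 : ∀ i : Fin n, gam n k i * x' i
        = gam n k i * x i + (if i = m then gam n k i else 0) := by
      intro i
      by_cases hi : i = m
      · rw [hi, hx'm, if_pos rfl]; ring
      · rw [hx'ne i hi]; simp [hi]
    rw [Finset.sum_congr rfl (fun i _ => h1 i), Finset.sum_add_distrib,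
      Finset.sum_ite_eq' Finset.univ m (fun i => gam n k i)]
    simp
  have hQ : (∑ i : Fin n, ∑ j : Fin n, if i < j ∧ i ≠ k ∧ j ≠ k then x' i * x' j else 0)
      = (∑ i : Fin n, ∑ j : Fin n, if i < j ∧ i ≠ k ∧ j ≠ k then x i * x j else 0)
        + (∑ j : Fin n, if j ≠ k ∧ j ≠ m then x j else 0) := by
    have hterm : ∀ i j : Fin n, (if i < j ∧ i ≠ k ∧ j ≠ k then x' i * x' j else 0)
        = (if i < j ∧ i ≠ k ∧ j ≠ k then x i * x j else 0)
          + (if i < j ∧ i ≠ k ∧ j ≠ k then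
              (if i = m then x j else if j = m then x i else 0) else 0) := by
      intro i j
      by_cases h : i < j ∧ i ≠ k ∧ j ≠ k
      · simp only [if_pos h]
        by_cases hi : i = m
        · have hj : j ≠ m := by rintro rfl; exact absurd h.1 (by rw [hi]; exact lt_irrefl _)
          rw [if_pos hi, hx'ne j hj, hi, hx'm]; ring
        · rw [if_neg hi, hx'ne i hi]
          by_cases hj : j = m
          · rw [if_pos hj, hj, hx'm]; ring
          · rw [if_neg hj, hx'ne j hj]; ring
      · simp [h]
    calc (∑ i : Fin n, ∑ j : Fin n, if i < j ∧ i ≠ k ∧ j ≠ k then x' i * x' j else 0)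
        = (∑ i : Fin n, ∑ j : Fin n, ((if i < j ∧ i ≠ k ∧ j ≠ k then x i * x j else 0)
          + (if i < j ∧ i ≠ k ∧ j ≠ k then
              (if i = m then x j else if j = m then x i else 0) else 0))) :=
          Finset.sum_congr rfl fun i _ => Finset.sum_congr rfl fun j _ => hterm i j
      _ = (∑ i : Fin n, ∑ j : Fin n, if i < j ∧ i ≠ k ∧ j ≠ k then x i * x j else 0)
          + (∑ i : Fin n, ∑ j : Fin n, if i < j ∧ i ≠ k ∧ j ≠ k then
              (if i = m then x j else if j = m then x i else 0) else 0) := by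
          rw [← Finset.sum_add_distrib]
          exact Finset.sum_congr rfl fun i _ => Finset.sum_add_distrib
      _ = (∑ i : Fin n, ∑ j : Fin n, if i < j ∧ i ≠ k ∧ j ≠ k then x i * x j else 0)
          + (∑ j : Fin n, if j ≠ k ∧ j ≠ m then x j else 0) := by
          congr 1
          have hG : ∀ i : Fin n, (∑ j : Fin n, if i < j ∧ i ≠ k ∧ j ≠ k then
              (if i = m then x j else if j = m then x i else 0) else 0)
            = (if i = m then (∑ j : Fin n, if m < j ∧ j ≠ k then x j else 0) else 0)
              + (if i < m ∧ i ≠ k then x i else 0) := by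
            intro i
            by_cases hi : i = m
            · rw [hi, if_pos rfl]
              simp [hmk]
            · rw [if_neg hi]
              have h2 : ∀ j : Fin n, (if i < j ∧ i ≠ k ∧ j ≠ k then
                  (if i = m then x j else if j = m then x i else 0) else 0)
                  = if j = m then (if i < m ∧ i ≠ k then x i else 0) else 0 := by
                intro j
                by_cases hj : j = m
                · simp [hj, hi, hmk, and_comm]
                · simp [hj, hi]
              rw [Finset.sum_congr rfl fun j _ => h2 j,
                Finset.sum_ite_eq' Finset.univ m fun _ => (if i < m ∧ i ≠ k then x i else 0)]
              simp
          rw [Finset.sum_congr rfl fun i _ => hG i, Finset.sum_add_distrib,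
            Finset.sum_ite_eq' Finset.univ m
              fun _ => (∑ j : Fin n, if m < j ∧ j ≠ k then x j else 0)]
          simp only [Finset.mem_univ, if_pos]
          rw [← Finset.sum_add_distrib]
          apply Finset.sum_congr rfl
          intro j _
          rcases lt_trichotomy j m with h | h | h
          · have h1 : ¬ (m < j) := not_lt_of_gt h
            have h2 : j ≠ m := ne_of_lt h
            by_cases hk : j = k <;> simp [h, h1, h2, hk]
          · simp [h, lt_irrefl]
          · have h1 : ¬ (j < m) := not_lt_of_gt h
            have h2 : j ≠ m := (ne_of_lt h).symm
            by_cases hk : j = k <;> simp [h, h1, h2, hk]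
  rw [hQ, hL]
  exact ztw _ _ _ _

lemma sum_combine (n : ℕ) (k l m : Fin n) (hkl : k ≠ l) (hkm : m ≠ k) (hlm : m ≠ l)
    (x : Fin n → ZMod 2) :
    (∑ j : Fin n, if j ≠ k ∧ j ≠ m then x j else 0)
      + (∑ j : Fin n, if j ≠ l ∧ j ≠ m then x j else 0) = x k + x l := by
  rw [← Finset.sum_add_distrib]
  have h : ∀ j : Fin n, (if j ≠ k ∧ j ≠ m then x j else 0)
      + (if j ≠ l ∧ j ≠ m then x j else 0)
      = (if j = k then x k else 0) + (if j = l then x l else 0) := by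
    intro j
    by_cases h1 : j = k
    · simp [h1, hkl.symm, hkm.symm, hkl]
    · by_cases h2 : j = l
      · simp [h2, hkl.symm, hlm.symm, hkl]
      · by_cases h3 : j = m
        · simp [h1, h2, h3, hkm, hlm]
        · simp [h1, h2, h3, CharTwo.add_self_eq_zero]
  rw [Finset.sum_congr rfl fun j _ => h j, Finset.sum_add_distrib,
    Finset.sum_ite_eq' Finset.univ k fun _ => x k,
    Finset.sum_ite_eq' Finset.univ l fun _ => x l]
  simp

lemma key (n : ℕ) (k l m : Fin n) (hkl : k ≠ l) (hkm : m ≠ k) (hlm : m ≠ l)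
    (x : Fin n → ZMod 2) :
    (omega n k (Function.update x m (x m + 1)) + omega n l (Function.update x m (x m + 1)))
      + (omega n k x + omega n l x)
      = x k + x l + gam n k m + gam n l m := by
  have h1 := omega_update n k m hkm x
  have h2 := omega_update n l m hlm x
  have h3 := sum_combine n k l m hkl hkm hlm x
  linear_combination h1 + h2 + h3

/-- The set E^K of partial assignments x_K such that all differences
ω^n_k + ω^n_ℓ (k, ℓ ∈ K) are constant over extensions of x_K has at most 2 elements. -/
theorem stmt1 (n : ℕ) (hn : 2 ≤ n) (K : Finset (Fin n)) (hK1 : K.Nonempty)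
    (hK2 : K ≠ Finset.univ) :
    Set.ncard {xK : {i : Fin n // i ∈ K} → ZMod 2 |
      ∀ k ∈ K, ∀ l ∈ K, ∃ c : ZMod 2, ∀ x : Fin n → ZMod 2,
        (∀ i : {i : Fin n // i ∈ K}, x i = xK i) →
          omega n k x + omega n l x = c} ≤ 2 := by
  classical
  obtain ⟨k0, hk0⟩ := hK1
  obtain ⟨m, hm⟩ : ∃ m, m ∉ K := by
    by_contra h; push_neg at h; exact hK2 (Finset.eq_univ_iff_forall.mpr h)
  set S : Set ({i : Fin n // i ∈ K} → ZMod 2) := {xK |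
      ∀ k ∈ K, ∀ l ∈ K, ∃ c : ZMod 2, ∀ x : Fin n → ZMod 2,
        (∀ i : {i : Fin n // i ∈ K}, x i = xK i) →
          omega n k x + omega n l x = c} with hS
  -- every member of S satisfies the key relation
  have hrel : ∀ z ∈ S, ∀ l : Fin n, ∀ hl : l ∈ K, l ≠ k0 →
      z ⟨k0, hk0⟩ + z ⟨l, hl⟩ = gam n k0 m + gam n l m := by
    intro z hz l hl hlk0
    obtain ⟨c, hc⟩ := hz k0 hk0 l hl
    set x : Fin n → ZMod 2 := fun i => if h : i ∈ K then z ⟨i, h⟩ else 0 with hx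
    have hext : ∀ i : {i : Fin n // i ∈ K}, x i = z i := by
      intro i; simp only [hx, dif_pos i.2]
    set x' := Function.update x m (x m + 1) with hx'
    have hext' : ∀ i : {i : Fin n // i ∈ K}, x' i = z i := by
      intro i
      have him : (i : Fin n) ≠ m := by rintro h; exact hm (h ▸ i.2)
      rw [hx', Function.update_of_ne him]; exact hext i
    have e1 := hc x hext
    have e2 := hc x' hext'
    have hkm : m ≠ k0 := fun h => hm (h ▸ hk0)
    have hlm : m ≠ l := fun h => hm (h ▸ hl)
    have hk := key n k0 l m (Ne.symm hlk0) hkm hlm x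
    rw [e1, e2, CharTwo.add_self_eq_zero] at hk
    have hxk0 : x k0 = z ⟨k0, hk0⟩ := hext ⟨k0, hk0⟩
    have hxl : x l = z ⟨l, hl⟩ := hext ⟨l, hl⟩
    rw [hxk0, hxl] at hk
    linear_combination -hk - CharTwo.add_self_eq_zero (gam n k0 m) - CharTwo.add_self_eq_zero (gam n l m)
  -- injectivity of evaluation at k0
  have hinj : Set.InjOn (fun z : {i : Fin n // i ∈ K} → ZMod 2 => z ⟨k0, hk0⟩) S := by
    intro z1 h1 z2 h2 heq
    funext i
    by_cases hik : (i : Fin n) = k0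
    · have : i = ⟨k0, hk0⟩ := Subtype.ext hik
      rw [this]; exact heq
    · have r1 := hrel z1 h1 i i.2 hik
      have r2 := hrel z2 h2 i i.2 hik
      have : z1 ⟨(i : Fin n), i.2⟩ = z2 ⟨(i : Fin n), i.2⟩ := by
        have heq' : z1 ⟨k0, hk0⟩ = z2 ⟨k0, hk0⟩ := heq
        linear_combination r1 - r2 - heq'
      simpa using this
  have := Set.ncard_le_ncard_of_injOn (t := (Set.univ : Set (ZMod 2)))
    (fun z : {i : Fin n // i ∈ K} → ZMod 2 => z ⟨k0, hk0⟩) (fun a _ => Set.mem_univ _)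
    hinj (Set.finite_univ)
  calc S.ncard ≤ (Set.univ : Set (ZMod 2)).ncard := this
    _ = 2 := by rw [Set.ncard_univ]; simp
end

section
/- Let f, g : (Fin m → ZMod 2) → ZMod 2 satisfy g(z) = f(z) + c + ∑_{i ∈ S} z_i (mod 2) for some constant c and some nonempty S ⊆ Fin m. Let Z be uniformly distributed on (Fin m → ZMod 2) and let (A, B) be a pair of random variables (jointly distributed, with values in ZMod 2) independent of Z. Then Pr[A = f(Z) ∧ B = g(Z)] ≤ 1/2. -/
open Finset

lemma lin_half (m : ℕ) (S : Finset (Fin m)) (hS : S.Nonempty) (b : ZMod 2) :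
    (Finset.univ.filter (fun z : Fin m → ZMod 2 => ∑ i ∈ S, z i = b)).card * 2 = 2 ^ m := by
  obtain ⟨i0, hi0⟩ := hS
  have hsum : ∀ z : Fin m → ZMod 2,
      ∑ i ∈ S, (Function.update z i0 (z i0 + 1)) i = (∑ i ∈ S, z i) + 1 := by
    intro z
    rw [← Finset.add_sum_erase _ _ hi0, ← Finset.add_sum_erase _ (fun i => z i) hi0]
    have h1 : (Function.update z i0 (z i0 + 1)) i0 = z i0 + 1 := Function.update_self _ _ _
    have h2 : ∑ i ∈ S.erase i0, (Function.update z i0 (z i0 + 1)) i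
        = ∑ i ∈ S.erase i0, z i := by
      apply Finset.sum_congr rfl
      intro i hi
      exact Function.update_of_ne (Finset.ne_of_mem_erase hi) _ _
    rw [h1, h2]; ring
  have hbij : ∀ a : ZMod 2,
      (Finset.univ.filter (fun z : Fin m → ZMod 2 => ∑ i ∈ S, z i = a)).card =
      (Finset.univ.filter (fun z : Fin m → ZMod 2 => ∑ i ∈ S, z i = a + 1)).card := by
    intro a
    have hinv : ∀ z : Fin m → ZMod 2,
        Function.update (Function.update z i0 (z i0 + 1)) i0
          (Function.update z i0 (z i0 + 1) i0 + 1) = z := by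
      intro z
      funext j
      by_cases h : j = i0
      · subst h
        simp [Function.update_self, show ∀ x : ZMod 2, x + 1 + 1 = x from by decide]
      · simp [Function.update_of_ne h]
    apply Finset.card_bij' (fun z _ => Function.update z i0 (z i0 + 1))
      (fun z _ => Function.update z i0 (z i0 + 1))
    · intro z _; exact hinv z
    · intro z _; exact hinv z
    · intro z hz
      simp only [Finset.mem_filter, Finset.mem_univ, true_and] at hz ⊢
      rw [hsum, hz]
    · intro z hz
      simp only [Finset.mem_filter, Finset.mem_univ, true_and] at hz ⊢
      rw [hsum, hz]
      simp [add_assoc, show (1 : ZMod 2) + 1 = 0 from rfl]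
  have hpart : (Finset.univ.filter (fun z : Fin m → ZMod 2 => ∑ i ∈ S, z i = b)).card +
      (Finset.univ.filter (fun z : Fin m → ZMod 2 => ¬ (∑ i ∈ S, z i = b))).card
      = (Finset.univ : Finset (Fin m → ZMod 2)).card :=
    Finset.card_filter_add_card_filter_not _
  have hneg : (Finset.univ.filter (fun z : Fin m → ZMod 2 => ¬ (∑ i ∈ S, z i = b))).card =
      (Finset.univ.filter (fun z : Fin m → ZMod 2 => ∑ i ∈ S, z i = b + 1)).card := by
    have hxy : ∀ x y : ZMod 2, (¬ x = y) ↔ x = y + 1 := by decide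
    congr 1
    ext z
    simp only [Finset.mem_filter, Finset.mem_univ, true_and]
    exact hxy _ _
  have hcard : (Finset.univ : Finset (Fin m → ZMod 2)).card = 2 ^ m := by
    simp [Finset.card_univ]
  rw [hneg, ← hbij b, hcard] at hpart
  set k := (Finset.univ.filter (fun z : Fin m → ZMod 2 => ∑ i ∈ S, z i = b)).card with hk
  linarith

/-- If g(z) = f(z) + c + ∑_{i∈S} z_i with S nonempty, Z uniform on Fin m → ZMod 2,
and (A,B) is a pair of binary random variables (with joint distribution P) independent of Z,
then Pr[A = f(Z) ∧ B = g(Z)] ≤ 1/2. -/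
theorem stmt2 (m : ℕ) (f g : (Fin m → ZMod 2) → ZMod 2) (c : ZMod 2)
    (S : Finset (Fin m)) (hS : S.Nonempty)
    (hfg : ∀ z, g z = f z + c + ∑ i ∈ S, z i)
    (P : ZMod 2 × ZMod 2 → ℝ) (hP : ∀ p, 0 ≤ P p) (hPs : ∑ p : ZMod 2 × ZMod 2, P p = 1) :
    ∑ p : ZMod 2 × ZMod 2, P p *
      (((Finset.univ.filter (fun z : Fin m → ZMod 2 => f z = p.1 ∧ g z = p.2)).card : ℝ)
        / 2 ^ m) ≤ 1 / 2 := by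
  have key : ∀ p : ZMod 2 × ZMod 2,
      (((Finset.univ.filter (fun z : Fin m → ZMod 2 => f z = p.1 ∧ g z = p.2)).card : ℝ)
        / 2 ^ m) ≤ 1 / 2 := by
    intro p
    have hsub : (Finset.univ.filter (fun z : Fin m → ZMod 2 => f z = p.1 ∧ g z = p.2)) ⊆
        (Finset.univ.filter (fun z : Fin m → ZMod 2 => ∑ i ∈ S, z i = p.2 - p.1 - c)) := by
      intro z hz
      simp only [Finset.mem_filter, Finset.mem_univ, true_and] at hz ⊢
      obtain ⟨h1, h2⟩ := hz
      have := hfg z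
      rw [h1, h2] at this
      rw [this]; ring
    have hle : (Finset.univ.filter (fun z : Fin m → ZMod 2 => f z = p.1 ∧ g z = p.2)).card * 2
        ≤ 2 ^ m := by
      calc _ ≤ (Finset.univ.filter
            (fun z : Fin m → ZMod 2 => ∑ i ∈ S, z i = p.2 - p.1 - c)).card * 2 :=
            Nat.mul_le_mul_right 2 (Finset.card_le_card hsub)
        _ = 2 ^ m := lin_half m S hS _
    rw [div_le_div_iff₀ (by positivity) (by norm_num)]
    have : ((Finset.univ.filter (fun z : Fin m → ZMod 2 => f z = p.1 ∧ g z = p.2)).card : ℝ) * 2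
        ≤ (2 : ℝ) ^ m := by exact_mod_cast hle
    linarith
  calc ∑ p : ZMod 2 × ZMod 2, P p *
        (((Finset.univ.filter (fun z : Fin m → ZMod 2 => f z = p.1 ∧ g z = p.2)).card : ℝ)
          / 2 ^ m)
      ≤ ∑ p : ZMod 2 × ZMod 2, P p * (1 / 2) :=
        Finset.sum_le_sum (fun p _ => mul_le_mul_of_nonneg_left (key p) (hP p))
    _ = 1 / 2 := by rw [← Finset.sum_mul, hPs, one_mul]
end

section
/- An n-party process function is a map ω : O → I (with O = ∏_k O_k, I = ∏_k I_k finite types) such that for every family of local functions f = (f_k : I_k → O_k), there exists a unique i ∈ I with i = ω(f(i)), where f(i) = (f_k(i_k))_k. Prove: every process function ω is element-wise constant, i.e., for all k, o ∈ O, and o'_k ∈ O_k, ω_k(o) = ω_k(Function.update o k o'_k). -/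
/-- An n-party process function: for every family of local functions f_k : I_k → O_k,
the map i ↦ ω(f(i)) has a unique fixed point. -/
def IsProcessFunction {n : ℕ} {O I : Fin n → Type*}
    (ω : (∀ k, O k) → ∀ k, I k) : Prop :=
  ∀ f : ∀ k, I k → O k, ∃! i : ∀ k, I k, i = ω (fun k => f k (i k))

/-- Every process function is element-wise constant: its k-th output component does not
depend on its k-th input component. -/
theorem stmt7 (n : ℕ) (O I : Fin n → Type*) [∀ k, Fintype (O k)] [∀ k, Fintype (I k)]
    (ω : (∀ k, O k) → ∀ k, I k) (hω : IsProcessFunction ω)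
    (k : Fin n) (o : ∀ j, O j) (o' : O k) :
    ω o k = ω (Function.update o k o') k := by
  classical
  by_contra h
  set f : ∀ j, I j → O j :=
    Function.update (fun j (_ : I j) => o j) k
      (fun ik => if ik = ω o k then o' else o k) with hf
  obtain ⟨i, hi, -⟩ := hω f
  by_cases hc : i k = ω o k
  · have heq : (fun j => f j (i j)) = Function.update o k o' := by
      funext j
      by_cases hj : j = k
      · subst hj; simp [hf, hc]
      · simp [hf, Function.update_of_ne hj]
    rw [heq] at hi
    exact h (hc ▸ congrFun hi k)
  · have heq : (fun j => f j (i j)) = o := by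
      funext j
      by_cases hj : j = k
      · subst hj; simp [hf, hc]
      · simp [hf, Function.update_of_ne hj]
    rw [heq] at hi
    exact hc (congrFun hi k)
end

section
/- Let ω : (Fin n → ZMod 2) → (Fin n → ZMod 2) be element-wise constant (its k-th output never depends on its k-th input). Fix a coordinate k. For a function f_k : ZMod 2 → ZMod 2, define the reduced (n-1)-party function ω^{f_k} obtained by setting the k-th input to f_k(ω_k(o)) (well-defined by element-wise constancy). If the reduced functions ω^{f_k} are process functions for f_k being the constant-0, constant-1, and identity functions, then ω^{f_k} is also a process function when f_k is the bit-flip (negation) function. -/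
/-- A process function on binary wires indexed by ι: for every family of local functions
g_j : ZMod 2 → ZMod 2, the map i ↦ ω(g(i)) has a unique fixed point. -/
def IsPF {ι : Type*} (ω : (ι → ZMod 2) → ι → ZMod 2) : Prop :=
  ∀ g : ι → ZMod 2 → ZMod 2, ∃! i : ι → ZMod 2, i = ω (fun j => g j (i j))

/-- Extend an assignment on coordinates ≠ k by value b at coordinate k. -/
def extendAt {n : ℕ} (k : Fin n) (o : {j : Fin n // j ≠ k} → ZMod 2) (b : ZMod 2) :
    Fin n → ZMod 2 :=
  fun i => if h : i = k then b else o ⟨i, h⟩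

/-- The reduced (n-1)-party function ω^{f_k}, obtained by wiring party k's input through
f_k back to its output (well-defined when ω is element-wise constant; the k-th input of
ω_k is set arbitrarily to 0). -/
def reduced {n : ℕ} (k : Fin n) (ω : (Fin n → ZMod 2) → Fin n → ZMod 2)
    (f : ZMod 2 → ZMod 2) :
    ({j : Fin n // j ≠ k} → ZMod 2) → {j : Fin n // j ≠ k} → ZMod 2 :=
  fun o j => ω (extendAt k o (f (ω (extendAt k o 0) k))) j.val

private lemma existsUnique_iff_natCard {α : Type*} (p : α → Prop) :
    (∃! a, p a) ↔ Nat.card {a // p a} = 1 := by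
  rw [Nat.card_eq_one_iff_exists]
  constructor
  · rintro ⟨a, ha, hu⟩
    exact ⟨⟨a, ha⟩, fun y => Subtype.ext (hu y.1 y.2)⟩
  · rintro ⟨⟨a, ha⟩, hu⟩
    exact ⟨a, ha, fun b hb => congrArg Subtype.val (hu ⟨b, hb⟩)⟩

/-- If the reductions of an element-wise constant ω by the constant-0, constant-1 and
identity functions at coordinate k are process functions, then so is the reduction by
the bit-flip function. -/
theorem stmt8 (n : ℕ) (k : Fin n) (ω : (Fin n → ZMod 2) → Fin n → ZMod 2)
    (hEW : ∀ (j : Fin n) (o : Fin n → ZMod 2) (b : ZMod 2),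
      ω o j = ω (Function.update o j b) j)
    (h0 : IsPF (reduced k ω (fun _ => 0)))
    (h1 : IsPF (reduced k ω (fun _ => 1)))
    (hid : IsPF (reduced k ω id)) :
    IsPF (reduced k ω (fun b => b + 1)) := by
  classical
  intro g
  have two01 : ∀ x : ZMod 2, x = 0 ∨ x = 1 := by decide
  set c : ({j : Fin n // j ≠ k} → ZMod 2) → ZMod 2 :=
    fun i => ω (extendAt k (fun j => g j (i j)) 0) k with hc
  set Q : ZMod 2 → ZMod 2 → ({j : Fin n // j ≠ k} → ZMod 2) → Prop :=
    fun v b i => (i = reduced k ω (fun _ => v) (fun j => g j (i j))) ∧ c i = b with hQ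
  have hred : ∀ (f : ZMod 2 → ZMod 2) (i : {j : Fin n // j ≠ k} → ZMod 2),
      reduced k ω f (fun j => g j (i j)) = reduced k ω (fun _ => f (c i)) (fun j => g j (i j)) :=
    fun _ _ => rfl
  have key : ∀ (f : ZMod 2 → ZMod 2) (i : {j : Fin n // j ≠ k} → ZMod 2),
      (i = reduced k ω f (fun j => g j (i j))) ↔ (Q (f 0) 0 i ∨ Q (f 1) 1 i) := by
    intro f i
    rcases two01 (c i) with h | h
    · have e : reduced k ω f (fun j => g j (i j))
          = reduced k ω (fun _ => f 0) (fun j => g j (i j)) := by rw [hred f, h]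
      constructor
      · intro hi; exact Or.inl ⟨hi.trans e, h⟩
      · rintro (⟨hi, -⟩ | ⟨-, h1'⟩)
        · exact hi.trans e.symm
        · exact absurd (h ▸ h1') (by decide)
    · have e : reduced k ω f (fun j => g j (i j))
          = reduced k ω (fun _ => f 1) (fun j => g j (i j)) := by rw [hred f, h]
      constructor
      · intro hi; exact Or.inr ⟨hi.trans e, h⟩
      · rintro (⟨-, h0'⟩ | ⟨hi, -⟩)
        · exact absurd (h ▸ h0') (by decide)
        · exact hi.trans e.symm
  set N : ZMod 2 → ZMod 2 → ℕ := fun v b => Nat.card {i // Q v b i} with hN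
  have hcard : ∀ (f : ZMod 2 → ZMod 2),
      (∃! i, i = reduced k ω f (fun j => g j (i j))) ↔ N (f 0) 0 + N (f 1) 1 = 1 := by
    intro f
    have hdisj : ∀ i, Q (f 0) 0 i → Q (f 1) 1 i → False := by
      intro i hi hi'
      exact absurd (hi.2 ▸ hi'.2) (by decide)
    have hequiv : {i // Q (f 0) 0 i ∨ Q (f 1) 1 i} ≃ {i // Q (f 0) 0 i} ⊕ {i // Q (f 1) 1 i} :=
      subtypeOrEquiv _ _ (by
        rw [Pi.disjoint_iff]
        intro i
        rw [Prop.disjoint_iff]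
        exact fun ⟨h, h'⟩ => hdisj i h h')
    calc (∃! i, i = reduced k ω f (fun j => g j (i j)))
        ↔ (∃! i, Q (f 0) 0 i ∨ Q (f 1) 1 i) := existsUnique_congr (key f)
      _ ↔ Nat.card {i // Q (f 0) 0 i ∨ Q (f 1) 1 i} = 1 := existsUnique_iff_natCard _
      _ ↔ N (f 0) 0 + N (f 1) 1 = 1 := by
          rw [Nat.card_congr hequiv, Nat.card_sum, hN]
  have e00 : N 0 0 + N 0 1 = 1 := (hcard (fun _ => 0)).mp (h0 g)
  have e11 : N 1 0 + N 1 1 = 1 := (hcard (fun _ => 1)).mp (h1 g)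
  have eid : N 0 0 + N 1 1 = 1 := (hcard id).mp (hid g)
  rw [hcard (fun b => b + 1), show ((0 : ZMod 2) + 1) = 1 by decide,
    show ((1 : ZMod 2) + 1) = 0 by decide]
  omega
end

section
/- For n ≥ 4 and k ∈ Fin (n-1), setting the last input of ω^n to 1 gives ω^n_k(x,1) = ω̄^{n-1}_k(x) + [k ≢ n mod 2], where [P] denotes the indicator of P in ZMod 2 and ω̄ is defined with γ̄ as above. -/
def gambar (n : ℕ) (k i : Fin n) : ZMod 2 :=
  if (i < k ∧ i.val % 2 = k.val % 2) ∨ (k < i ∧ ¬ (i.val % 2 = k.val % 2)) then 1 else 0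

def omegabar (n : ℕ) (k : Fin n) (x : Fin n → ZMod 2) : ZMod 2 :=
  (∑ i : Fin n, ∑ j : Fin n, if i < j ∧ i ≠ k ∧ j ≠ k then x i * x j else 0)
    + ∑ i : Fin n, gambar n k i * x i

lemma gam_castSucc (m : ℕ) (k i : Fin m) :
    gam (m + 1) k.castSucc i.castSucc = gam m k i := by
  simp [gam, Fin.castSucc_lt_castSucc_iff]

lemma gambar_eq (m : ℕ) (k i : Fin m) :
    gambar m k i = gam m k i + (if i ≠ k then 1 else 0) := by
  unfold gam gambar
  rcases lt_trichotomy i k with h | h | h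
  · by_cases hp : i.val % 2 = k.val % 2 <;>
      simp [h, h.ne, h.ne', not_lt_of_gt h, hp] <;> decide
  · simp [h]
  · by_cases hp : i.val % 2 = k.val % 2 <;>
      simp [h, h.ne, h.ne', not_lt_of_gt h, hp] <;> decide

set_option linter.unnecessarySeqFocus false

/-- For n = m + 1 ≥ 4 and k ∈ Fin (n-1), setting the last input of ω^n to 1 gives
ω^n_k(x,1) = ω̄^{n-1}_k(x) + [k ≢ n mod 2] (indicator in ZMod 2). -/
theorem stmt13 (m : ℕ) (hm : 4 ≤ m + 1) (k : Fin m) (x : Fin m → ZMod 2) :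
    omega (m + 1) k.castSucc (Fin.snoc x 1)
      = omegabar m k x + (if ¬ (k.val % 2 = (m + 1) % 2) then (1 : ZMod 2) else 0) := by
  unfold omega omegabar
  have hne : ¬ (Fin.last m = k.castSucc) := (Fin.castSucc_lt_last k).ne'
  have hnl : ∀ j : Fin m, ¬ (Fin.last m < j.castSucc) :=
    fun j => not_lt.mpr (Fin.castSucc_lt_last j).le
  simp only [Fin.sum_univ_castSucc, Fin.snoc_castSucc, Fin.snoc_last,
    Fin.castSucc_lt_castSucc_iff, Fin.castSucc_lt_last, Fin.castSucc_inj, ne_eq,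
    gam_castSucc, hne, hnl, lt_irrefl, false_and, and_false, not_false_eq_true, and_true,
    true_and, if_true, if_false, mul_one, Finset.sum_const_zero, add_zero]
  simp only [gambar_eq, add_mul, ite_mul, one_mul, zero_mul, Finset.sum_add_distrib]
  have hgl : gam (m + 1) k.castSucc (Fin.last m)
      = if ¬ (k.val % 2 = (1 + m) % 2) then (1 : ZMod 2) else 0 := by
    have hk : k.castSucc < Fin.last m := Fin.castSucc_lt_last k
    unfold gam
    simp only [hk, hk.not_gt, false_and, true_and, false_or, Fin.val_last, Fin.coe_castSucc]
    rcases Nat.mod_two_eq_zero_or_one k.val with h | h <;>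
      rcases Nat.mod_two_eq_zero_or_one m with h2 | h2 <;>
      simp [h, h2, Nat.add_mod]
  rw [hgl]
  ring
end

section
/- Decomposition identity: for n ≥ 2, k ∈ Fin (n−1), and x ∈ (Fin n → ZMod 2), ω^n_k(x) = ω^{n−1}_k(x_{<n−1}) + (∑_{i ∈ Fin(n−1), i≠k} x_i)·x_{n−1} + [k ≢ n mod 2]·x_{n−1} in ZMod 2. -/
/-- Decomposition identity: for n = m + 1 ≥ 2, k ∈ Fin (n−1), and x : Fin n → ZMod 2,
ω^n_k(x) = ω^{n−1}_k(x_{<n−1}) + (∑_{i≠k, i<n−1} x_i)·x_{n−1} + [k ≢ n mod 2]·x_{n−1}. -/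
theorem stmt17 (m : ℕ) (hm : 2 ≤ m + 1) (k : Fin m) (x : Fin (m + 1) → ZMod 2) :
    omega (m + 1) k.castSucc x
      = omega m k (fun i => x i.castSucc)
        + (∑ i ∈ Finset.univ.filter (fun i : Fin m => i ≠ k), x i.castSucc) * x (Fin.last m)
        + (if ¬ (k.val % 2 = (m + 1) % 2) then (1 : ZMod 2) else 0) * x (Fin.last m) := by
  have h1 : ∀ i : Fin m, ¬ Fin.last m < i.castSucc := fun i => (Fin.castSucc_lt_last i).asymm
  have h2 : Fin.last m ≠ k.castSucc := (Fin.castSucc_lt_last k).ne'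
  have h3 : ↑k % 2 = (m + 1) % 2 ↔ ¬ (m % 2 = ↑k % 2) := by omega
  simp only [omega, gam, Fin.sum_univ_castSucc, Fin.castSucc_lt_castSucc_iff, ne_eq,
    Fin.castSucc_inj, Fin.castSucc_lt_last, h1, h2, Fin.val_last, Fin.coe_castSucc,
    false_or, lt_irrefl, false_and, and_false, if_false, true_and, and_true, not_true, not_false_iff,
    if_true, Finset.sum_const_zero, add_zero, zero_add, h3, not_not]
  rw [Finset.sum_filter, Finset.sum_mul]
  simp only [ite_mul, zero_mul]
  rw [Finset.sum_add_distrib]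
  ring
end

section
/- Parity separation for ω within a proper subset: let K ⊊ Fin n be nonempty and k, ℓ ∈ K with k ≠ ℓ. For any x, ω^n_k(x) + ω^n_ℓ(x) = ∑_{i ∉ K} x_i·(γ_{k,i} + γ_{ℓ,i} + x_k + x_ℓ) + β_k + β_ℓ (mod 2), where β_k := ⊕_{i<j, i,j∈K\{k\}} x_i x_j ⊕ ⊕_{i∈K} γ_{k,i} x_i. -/
/-- β_k := ⊕_{i<j, i,j ∈ K∖{k}} x_i x_j ⊕ ⊕_{i∈K} γ_{k,i} x_i (depends only on x_K). -/
def betaK (n : ℕ) (K : Finset (Fin n)) (k : Fin n) (x : Fin n → ZMod 2) : ZMod 2 :=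
  (∑ i : Fin n, ∑ j : Fin n, if i < j ∧ i ∈ K ∧ j ∈ K ∧ i ≠ k ∧ j ≠ k then x i * x j else 0)
    + ∑ i ∈ K, gam n k i * x i


lemma two_eq_zero' : ∀ a : ZMod 2, a + a = 0 := by decide

lemma sum_if_const {n : ℕ} (c : Prop) [Decidable c] (G : Fin n → ZMod 2) :
    (∑ j : Fin n, (if c then G j else 0)) = if c then ∑ j : Fin n, G j else 0 := by
  split_ifs <;> simp

lemma pair_merge {n : ℕ} (K : Finset (Fin n)) (k l : Fin n)
    (hk : k ∈ K) (hl : l ∈ K) (x : Fin n → ZMod 2) (i : Fin n) :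
    (if k < i ∧ i ∉ K then x k * x i else 0)
      + (if l < i ∧ i ∉ K then x l * x i else 0)
      + (if i < k ∧ i ∉ K then x i * x k else 0)
      + (if i < l ∧ i ∉ K then x i * x l else 0)
    = if i ∈ Kᶜ then x i * (x k + x l) else 0 := by
  by_cases hiK : i ∈ K
  · simp [hiK]
  · have hik : i ≠ k := fun h => hiK (h ▸ hk)
    have hil : i ≠ l := fun h => hiK (h ▸ hl)
    rcases hik.lt_or_gt with h | h <;> rcases hil.lt_or_gt with h' | h' <;>
      simp [hiK, h, h', lt_asymm h, lt_asymm h'] <;> ring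

lemma ppk {n : ℕ} (K : Finset (Fin n)) (k i j : Fin n) (t : ZMod 2) :
    (if i < j ∧ i ≠ k ∧ j ≠ k then t else 0)
      + (if i < j ∧ i ∈ K ∧ j ∈ K ∧ i ≠ k ∧ j ≠ k then t else 0)
    = if i < j ∧ i ≠ k ∧ j ≠ k ∧ ¬(i ∈ K ∧ j ∈ K) then t else 0 := by
  by_cases h1 : i < j <;> by_cases h2 : i = k <;> by_cases h3 : j = k <;>
    by_cases h4 : i ∈ K <;> by_cases h5 : j ∈ K <;> simp_all [two_eq_zero']

lemma ppx {n : ℕ} (K : Finset (Fin n)) (k l i j : Fin n)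
    (hk : k ∈ K) (hl : l ∈ K) (hkl : k ≠ l) (t : ZMod 2) :
    (if i < j ∧ i ≠ k ∧ j ≠ k ∧ ¬(i ∈ K ∧ j ∈ K) then t else 0)
      + (if i < j ∧ i ≠ l ∧ j ≠ l ∧ ¬(i ∈ K ∧ j ∈ K) then t else 0)
    = if i < j ∧ ¬(i ∈ K ∧ j ∈ K) ∧ (i = k ∨ i = l ∨ j = k ∨ j = l) then t else 0 := by
  by_cases h1 : i < j <;> by_cases h2 : i = k <;> by_cases h3 : j = k <;>
    by_cases h4 : i = l <;> by_cases h5 : j = l <;>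
    by_cases h6 : i ∈ K <;> by_cases h7 : j ∈ K <;> simp_all [two_eq_zero']

lemma pps {n : ℕ} (K : Finset (Fin n)) (k l i j : Fin n)
    (hk : k ∈ K) (hl : l ∈ K) (hkl : k ≠ l) (x : Fin n → ZMod 2) :
    (if i < j ∧ ¬(i ∈ K ∧ j ∈ K) ∧ (i = k ∨ i = l ∨ j = k ∨ j = l) then x i * x j else 0)
    = (if i = k then (if k < j ∧ j ∉ K then x k * x j else 0) else 0)
      + (if i = l then (if l < j ∧ j ∉ K then x l * x j else 0) else 0)
      + (if j = k then (if i < k ∧ i ∉ K then x i * x k else 0) else 0)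
      + (if j = l then (if i < l ∧ i ∉ K then x i * x l else 0) else 0) := by
  by_cases h1 : i < j <;> by_cases h2 : i = k <;> by_cases h3 : j = k <;>
    by_cases h4 : i = l <;> by_cases h5 : j = l <;>
    by_cases h6 : i ∈ K <;> by_cases h7 : j ∈ K <;> simp_all [two_eq_zero']

lemma quadlem {n : ℕ} (K : Finset (Fin n)) (k l : Fin n)
    (hk : k ∈ K) (hl : l ∈ K) (hkl : k ≠ l) (x : Fin n → ZMod 2) :
    (∑ i : Fin n, ∑ j : Fin n, if i < j ∧ i ≠ k ∧ j ≠ k then x i * x j else 0)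
      + (∑ i : Fin n, ∑ j : Fin n, if i < j ∧ i ≠ l ∧ j ≠ l then x i * x j else 0)
    = (∑ i : Fin n, ∑ j : Fin n, if i < j ∧ i ∈ K ∧ j ∈ K ∧ i ≠ k ∧ j ≠ k then x i * x j else 0)
      + (∑ i : Fin n, ∑ j : Fin n, if i < j ∧ i ∈ K ∧ j ∈ K ∧ i ≠ l ∧ j ≠ l then x i * x j else 0)
      + ∑ i ∈ Kᶜ, x i * (x k + x l) := by
  classical
  set Qk := ∑ i : Fin n, ∑ j : Fin n, if i < j ∧ i ≠ k ∧ j ≠ k then x i * x j else 0 with hQk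
  set Ql := ∑ i : Fin n, ∑ j : Fin n, if i < j ∧ i ≠ l ∧ j ≠ l then x i * x j else 0 with hQl
  set QKk := ∑ i : Fin n, ∑ j : Fin n, if i < j ∧ i ∈ K ∧ j ∈ K ∧ i ≠ k ∧ j ≠ k then x i * x j else 0 with hQKk
  set QKl := ∑ i : Fin n, ∑ j : Fin n, if i < j ∧ i ∈ K ∧ j ∈ K ∧ i ≠ l ∧ j ≠ l then x i * x j else 0 with hQKl
  set Dk := ∑ i : Fin n, ∑ j : Fin n, if i < j ∧ i ≠ k ∧ j ≠ k ∧ ¬(i ∈ K ∧ j ∈ K) then x i * x j else 0 with hDk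
  set Dl := ∑ i : Fin n, ∑ j : Fin n, if i < j ∧ i ≠ l ∧ j ≠ l ∧ ¬(i ∈ K ∧ j ∈ K) then x i * x j else 0 with hDl
  set T := ∑ i : Fin n, ∑ j : Fin n,
      if i < j ∧ ¬(i ∈ K ∧ j ∈ K) ∧ (i = k ∨ i = l ∨ j = k ∨ j = l) then x i * x j else 0 with hT
  have e1 : Qk + QKk = Dk := by
    rw [hQk, hQKk, hDk, ← Finset.sum_add_distrib]
    refine Finset.sum_congr rfl fun i _ => ?_
    rw [← Finset.sum_add_distrib]
    exact Finset.sum_congr rfl fun j _ => ppk K k i j _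
  have e2 : Ql + QKl = Dl := by
    rw [hQl, hQKl, hDl, ← Finset.sum_add_distrib]
    refine Finset.sum_congr rfl fun i _ => ?_
    rw [← Finset.sum_add_distrib]
    exact Finset.sum_congr rfl fun j _ => ppk K l i j _
  have e3 : Dk + Dl = T := by
    rw [hDk, hDl, hT, ← Finset.sum_add_distrib]
    refine Finset.sum_congr rfl fun i _ => ?_
    rw [← Finset.sum_add_distrib]
    exact Finset.sum_congr rfl fun j _ => ppx K k l i j hk hl hkl _
  have e4 : T = ∑ i ∈ Kᶜ, x i * (x k + x l) := by
    have step1 : T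
        = (∑ i : Fin n, ∑ j : Fin n, if i = k then (if k < j ∧ j ∉ K then x k * x j else 0) else 0)
          + (∑ i : Fin n, ∑ j : Fin n, if i = l then (if l < j ∧ j ∉ K then x l * x j else 0) else 0)
          + (∑ i : Fin n, ∑ j : Fin n, if j = k then (if i < k ∧ i ∉ K then x i * x k else 0) else 0)
          + (∑ i : Fin n, ∑ j : Fin n, if j = l then (if i < l ∧ i ∉ K then x i * x l else 0) else 0) := by
      rw [hT, ← Finset.sum_add_distrib, ← Finset.sum_add_distrib, ← Finset.sum_add_distrib]
      refine Finset.sum_congr rfl fun i _ => ?_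
      rw [← Finset.sum_add_distrib, ← Finset.sum_add_distrib, ← Finset.sum_add_distrib]
      exact Finset.sum_congr rfl fun j _ => pps K k l i j hk hl hkl x
    have c1 : (∑ i : Fin n, ∑ j : Fin n, if i = k then (if k < j ∧ j ∉ K then x k * x j else 0) else 0)
        = ∑ j : Fin n, if k < j ∧ j ∉ K then x k * x j else 0 := by
      simp [sum_if_const]
    have c2 : (∑ i : Fin n, ∑ j : Fin n, if i = l then (if l < j ∧ j ∉ K then x l * x j else 0) else 0)
        = ∑ j : Fin n, if l < j ∧ j ∉ K then x l * x j else 0 := by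
      simp [sum_if_const]
    have c3 : (∑ i : Fin n, ∑ j : Fin n, if j = k then (if i < k ∧ i ∉ K then x i * x k else 0) else 0)
        = ∑ i : Fin n, if i < k ∧ i ∉ K then x i * x k else 0 := by
      refine Finset.sum_congr rfl fun i _ => ?_
      simp
    have c4 : (∑ i : Fin n, ∑ j : Fin n, if j = l then (if i < l ∧ i ∉ K then x i * x l else 0) else 0)
        = ∑ i : Fin n, if i < l ∧ i ∉ K then x i * x l else 0 := by
      refine Finset.sum_congr rfl fun i _ => ?_
      simp
    rw [step1, c1, c2, c3, c4, ← Finset.sum_add_distrib, ← Finset.sum_add_distrib,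
      ← Finset.sum_add_distrib]
    have merged : ∀ i : Fin n,
        (if k < i ∧ i ∉ K then x k * x i else 0) + (if l < i ∧ i ∉ K then x l * x i else 0)
          + (if i < k ∧ i ∉ K then x i * x k else 0) + (if i < l ∧ i ∉ K then x i * x l else 0)
        = if i ∈ Kᶜ then x i * (x k + x l) else 0 := pair_merge K k l hk hl x
    calc (∑ i : Fin n, ((if k < i ∧ i ∉ K then x k * x i else 0)
            + (if l < i ∧ i ∉ K then x l * x i else 0)
            + (if i < k ∧ i ∉ K then x i * x k else 0)
            + (if i < l ∧ i ∉ K then x i * x l else 0)))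
        = ∑ i : Fin n, if i ∈ Kᶜ then x i * (x k + x l) else 0 :=
          Finset.sum_congr rfl fun i _ => merged i
      _ = ∑ i ∈ Kᶜ, x i * (x k + x l) := by
          rw [Finset.sum_ite_mem, Finset.univ_inter]
  calc Qk + Ql = (Qk + QKk) + (Ql + QKl) + (QKk + QKl) := by
        linear_combination - two_eq_zero' QKk - two_eq_zero' QKl
    _ = Dk + Dl + (QKk + QKl) := by rw [e1, e2]
    _ = T + (QKk + QKl) := by rw [e3]
    _ = QKk + QKl + ∑ i ∈ Kᶜ, x i * (x k + x l) := by rw [e4]; ring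

/-- Parity separation within a proper subset K: for k ≠ ℓ in K,
ω^n_k(x) + ω^n_ℓ(x) = ∑_{i∉K} x_i·(γ_{k,i} + γ_{ℓ,i} + x_k + x_ℓ) + β_k + β_ℓ. -/
theorem stmt18 (n : ℕ) (K : Finset (Fin n)) (hK1 : K.Nonempty) (hK2 : K ≠ Finset.univ)
    (k l : Fin n) (hk : k ∈ K) (hl : l ∈ K) (hkl : k ≠ l) (x : Fin n → ZMod 2) :
    omega n k x + omega n l x
      = ∑ i ∈ Kᶜ, x i * (gam n k i + gam n l i + x k + x l)
        + betaK n K k x + betaK n K l x := by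
  classical
  have link : (∑ i : Fin n, gam n k i * x i)
      = (∑ i ∈ K, gam n k i * x i) + ∑ i ∈ Kᶜ, gam n k i * x i :=
    (Finset.sum_add_sum_compl K _).symm
  have linl : (∑ i : Fin n, gam n l i * x i)
      = (∑ i ∈ K, gam n l i * x i) + ∑ i ∈ Kᶜ, gam n l i * x i :=
    (Finset.sum_add_sum_compl K _).symm
  have cross : ∑ i ∈ Kᶜ, x i * (gam n k i + gam n l i + x k + x l)
      = (∑ i ∈ Kᶜ, gam n k i * x i) + (∑ i ∈ Kᶜ, gam n l i * x i)
        + ∑ i ∈ Kᶜ, x i * (x k + x l) := by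
    rw [← Finset.sum_add_distrib, ← Finset.sum_add_distrib]
    exact Finset.sum_congr rfl fun i _ => by ring
  have quad := quadlem K k l hk hl hkl x
  unfold omega betaK
  linear_combination link + linl + quad - cross
end
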